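/- Telescoping elliptic potential: let Σ₁ be positive definite and define Σ_{j+1} = Σ_j + A_j for PSD matrices A_j, j = 1,…,P. If for each j, tr(Σ_j^{-1/2} A_j Σ_j^{-1/2}) ≤ L for some L ≥ e − 1, then Σ_{j=1}^P tr(Σ_j^{-1/2} A_j Σ_j^{-1/2}) ≤ L · log(det Σ_{P+1}/det Σ₁). -/

import Mathlib

/-!
Conjugating by `Σⱼ^{-1/2}` turns the `j`-th step into `Mⱼ = Σⱼ^{-1/2} Aⱼ Σⱼ^{-1/2} ⪰ 0` with
`det (1 + Mⱼ) = det Σⱼ₊₁ / det Σⱼ`. Since `exp` lies below its chord on `[0, 1]`,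
`exp s ≤ 1 + s (e - 1)`, every eigenvalue `μ ∈ [0, L]` of `Mⱼ` satisfies `μ ≤ L log (1 + μ)` once
`L ≥ e - 1`; summing over eigenvalues gives `tr Mⱼ ≤ L log det (1 + Mⱼ)`, and the
log-determinants telescope.
-/

open Matrix Finset

open scoped ComplexOrder in
/-- The square root of a positive semidefinite matrix, as `Matrix.PosSemidef.sqrt` was defined
in the older Mathlib (removed since). -/
noncomputable def Matrix.PosSemidef.sqrt {n 𝕜 : Type*} [Fintype n] [DecidableEq n] [RCLike 𝕜]
    {A : Matrix n n 𝕜} (hA : A.PosSemidef) : Matrix n n 𝕜 :=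
  hA.1.eigenvectorUnitary.1 * diagonal ((↑) ∘ Real.sqrt ∘ hA.1.eigenvalues) *
    (star hA.1.eigenvectorUnitary : Matrix n n 𝕜)

lemma Real.le_mul_log_one_add {t L : ℝ} (ht : 0 ≤ t) (htL : t ≤ L) (hL : Real.exp 1 - 1 ≤ L) :
    t ≤ L * Real.log (1 + t) := by
  have hL0 : 0 < L := by linarith [Real.add_one_lt_exp one_ne_zero]
  set s := t / L
  have hs0 : 0 ≤ s := div_nonneg ht hL0.le
  have hs1 : s ≤ 1 := (div_le_one hL0).2 htL
  have hexp : Real.exp s ≤ 1 - s + s * Real.exp 1 := by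
    simpa using convexOn_exp.2 (Set.mem_univ 0) (Set.mem_univ 1) (by linarith) hs0 (by ring)
  have hsL : s * L = t := div_mul_cancel₀ t hL0.ne'
  have hlog : s ≤ Real.log (1 + t) :=
    (Real.le_log_iff_exp_le (by linarith)).2 (by nlinarith)
  calc t = L * s := by rw [← hsL, mul_comm]
    _ ≤ L * Real.log (1 + t) := by gcongr

namespace Matrix

open scoped ComplexOrder

variable {n 𝕜 : Type*} [Fintype n] [DecidableEq n] [RCLike 𝕜]

lemma PosSemidef.sqrt_mul_self {A : Matrix n n 𝕜} (hA : A.PosSemidef) :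
    hA.sqrt * hA.sqrt = A := by
  set U : Matrix n n 𝕜 := hA.1.eigenvectorUnitary.1
  have hU : star U * U = 1 := mem_unitaryGroup_iff'.mp hA.1.eigenvectorUnitary.2
  conv_rhs => rw [hA.1.spectral_theorem, Unitary.conjStarAlgAut_apply]
  calc hA.sqrt * hA.sqrt
      = U * (diagonal ((↑) ∘ Real.sqrt ∘ hA.1.eigenvalues) * (star U * U) *
          diagonal ((↑) ∘ Real.sqrt ∘ hA.1.eigenvalues)) * star U := by
        simp only [PosSemidef.sqrt, U, Matrix.mul_assoc]
    _ = U * diagonal ((↑) ∘ hA.1.eigenvalues) * star U := by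
        rw [hU, Matrix.mul_one, diagonal_mul_diagonal]
        congr 3
        ext i
        simp [← RCLike.ofReal_mul, Real.mul_self_sqrt (hA.eigenvalues_nonneg i)]

lemma PosSemidef.isHermitian_sqrt {A : Matrix n n 𝕜} (hA : A.PosSemidef) :
    hA.sqrt.IsHermitian := by
  simp [IsHermitian, PosSemidef.sqrt, conjTranspose_mul, Matrix.mul_assoc, diagonal_conjTranspose,
    star_eq_conjTranspose, Pi.star_def, Function.comp_def]

lemma IsHermitian.det_one_add {A : Matrix n n 𝕜} (hA : A.IsHermitian) :
    (1 + A).det = ∏ i, (1 + (hA.eigenvalues i : 𝕜)) := by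
  set U : Matrix n n 𝕜 := hA.eigenvectorUnitary.1
  have h1 : (1 : Matrix n n 𝕜) + A = U * (1 + diagonal ((↑) ∘ hA.eigenvalues)) * star U := by
    conv_lhs => rw [hA.spectral_theorem, Unitary.conjStarAlgAut_apply]
    rw [Matrix.mul_add, Matrix.add_mul, Matrix.mul_one,
      mem_unitaryGroup_iff.mp hA.eigenvectorUnitary.2]
  rw [h1, det_conj_of_mul_eq_one (mem_unitaryGroup_iff.mp hA.eigenvectorUnitary.2)
    (mem_unitaryGroup_iff'.mp hA.eigenvectorUnitary.2), ← diagonal_one, diagonal_add,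
    det_diagonal]
  rfl

lemma PosSemidef.trace_le_mul_log_det_one_add {M : Matrix n n ℝ} (hM : M.PosSemidef) {L : ℝ}
    (hL : Real.exp 1 - 1 ≤ L) (htr : M.trace ≤ L) :
    M.trace ≤ L * Real.log (1 + M).det := by
  have hμ : ∀ i, 0 ≤ hM.1.eigenvalues i := hM.eigenvalues_nonneg
  have htrace : M.trace = ∑ i, hM.1.eigenvalues i := by
    simpa using hM.1.trace_eq_sum_eigenvalues
  have hlog : Real.log (1 + M).det = ∑ i, Real.log (1 + hM.1.eigenvalues i) := by
    rw [hM.1.det_one_add, Real.log_prod fun i _ => by simp; linarith [hμ i]]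
    simp
  rw [hlog, mul_sum, htrace]
  refine sum_le_sum fun i _ => Real.le_mul_log_one_add (hμ i) ?_ hL
  exact (single_le_sum (fun j _ => hμ j) (mem_univ i)).trans (htrace ▸ htr)

lemma det_one_add_inv_mul_mul_inv {K : Type*} [Field K] {B : Matrix n n K} (hB : IsUnit B)
    (A : Matrix n n K) : (1 + B⁻¹ * A * B⁻¹).det = (B * B + A).det / (B * B).det := by
  have hB' : IsUnit B.det := (isUnit_iff_isUnit_det B).mp hB
  have h : 1 + B⁻¹ * A * B⁻¹ = B⁻¹ * (B * B + A) * B⁻¹ := by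
    rw [Matrix.mul_add, Matrix.add_mul, ← Matrix.mul_assoc, nonsing_inv_mul _ hB',
      Matrix.one_mul, mul_nonsing_inv _ hB']
  rw [h, det_mul, det_mul, det_nonsing_inv, det_mul, Ring.inverse_eq_inv']
  field_simp [hB'.ne_zero]

lemma PosDef.trace_le_mul_log_det_add_sub {S A : Matrix n n ℝ} (hS : S.PosDef)
    (hA : A.PosSemidef) {L : ℝ} (hL : Real.exp 1 - 1 ≤ L)
    (htr : (hS.posSemidef.sqrt⁻¹ * A * hS.posSemidef.sqrt⁻¹).trace ≤ L) :
    (hS.posSemidef.sqrt⁻¹ * A * hS.posSemidef.sqrt⁻¹).trace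
      ≤ L * (Real.log (S + A).det - Real.log S.det) := by
  set B := hS.posSemidef.sqrt
  have hBB : B * B = S := hS.posSemidef.sqrt_mul_self
  have hB : IsUnit B := isUnit_of_mul_isUnit_left (hBB ▸ hS.isUnit)
  have hM : (B⁻¹ * A * B⁻¹).PosSemidef := by
    have h := hA.mul_mul_conjTranspose_same B⁻¹
    rwa [hS.posSemidef.isHermitian_sqrt.inv.eq] at h
  calc (B⁻¹ * A * B⁻¹).trace ≤ L * Real.log (1 + B⁻¹ * A * B⁻¹).det :=
        hM.trace_le_mul_log_det_one_add hL htr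
    _ = L * (Real.log (S + A).det - Real.log S.det) := by
        rw [det_one_add_inv_mul_mul_inv hB, hBB,
          Real.log_div (hS.add_posSemidef hA).det_pos.ne' hS.det_pos.ne']

end Matrix

/-- Telescoping elliptic potential: with `Σ_{j+1} = Σ_j + A_j` for PSD `A_j`, positive
definite `Σ_j`, and per-step bound `tr(Σ_j^{-1/2} A_j Σ_j^{-1/2}) ≤ L` for `L ≥ e − 1`,
the sum of the per-step traces is at most `L · log (det Σ_{P+1} / det Σ₁)`. -/
theorem stmt_17 {d : ℕ} (P : ℕ)
    (S A : ℕ → Matrix (Fin d) (Fin d) ℝ)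
    (hSpd : ∀ j, (S j).PosDef)
    (hA : ∀ j, (A j).PosSemidef)
    (hrec : ∀ j, 1 ≤ j → j ≤ P → S (j + 1) = S j + A j)
    (L : ℝ) (hL : Real.exp 1 - 1 ≤ L)
    (htr : ∀ j, 1 ≤ j → j ≤ P →
      (((hSpd j).posSemidef.sqrt)⁻¹ * A j * ((hSpd j).posSemidef.sqrt)⁻¹).trace ≤ L) :
    ∑ j ∈ Finset.Icc 1 P,
        (((hSpd j).posSemidef.sqrt)⁻¹ * A j * ((hSpd j).posSemidef.sqrt)⁻¹).trace
      ≤ L * Real.log ((S (P + 1)).det / (S 1).det) := by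
  have hstep : ∀ j ∈ Icc 1 P,
      (((hSpd j).posSemidef.sqrt)⁻¹ * A j * ((hSpd j).posSemidef.sqrt)⁻¹).trace
        ≤ L * (Real.log (S (j + 1)).det - Real.log (S j).det) := by
    intro j hj
    obtain ⟨hj1, hjP⟩ := mem_Icc.mp hj
    rw [hrec j hj1 hjP]
    exact (hSpd j).trace_le_mul_log_det_add_sub (hA j) hL (htr j hj1 hjP)
  calc _ ≤ ∑ j ∈ Icc 1 P, L * (Real.log (S (j + 1)).det - Real.log (S j).det) :=
        sum_le_sum hstep
    _ = L * (Real.log (S (P + 1)).det - Real.log (S 1).det) := by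
        rw [← mul_sum, ← Ico_add_one_right_eq_Icc,
          sum_Ico_sub (fun j => Real.log (S j).det) (by omega)]
    _ = L * Real.log ((S (P + 1)).det / (S 1).det) := by
        rw [Real.log_div (hSpd (P + 1)).det_pos.ne' (hSpd 1).det_pos.ne']
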